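/- Let E be a finite effect algebra with (pairwise distinct) atoms a_1,…,a_m, and suppose s_1,…,s_m are nonnegative real numbers such that Σ_{t=1}^m y_t s_t = 1 for every (y_1,…,y_m) ∈ Seq(E). If an element x ∈ E admits two representations x = k_1 a_1 ⊕ … ⊕ k_m a_m = l_1 a_1 ⊕ … ⊕ l_m a_m (with k_t, l_t ∈ ℕ, both orthosums defined), then Σ_{t=1}^m k_t s_t = Σ_{t=1}^m l_t s_t. (In other words, the map h(k_1 a_1 ⊕ … ⊕ k_m a_m) = Σ_t k_t s_t is well defined on E.) -/

import Mathlib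

/-! The orthosupplement `x'` of `x` is an orthosum of atoms, with multiplicities `j` say. Since
orthosums may be rearranged freely, `x ⊕ x' = 1` puts both `k + j` and `l + j` in `Seq(E)`, so
`∑ (k t + j t) s t = 1 = ∑ (l t + j t) s t`, and cancelling `∑ j t s t` gives the claim.

Atomic decompositions exist because `E` is finite: the strict order `p < p ⊕ r` (`r ≠ 0`) is
well founded, and a nonzero non-atom is the orthosum of two elements strictly below it. -/

/-- An effect algebra: a set with 0, 1 and a partially defined binary
operation `⊕`, modeled as an `Option`-valued operation. -/
structure EffectAlgebra (E : Type*) where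
  oplus : E → E → Option E
  zero : E
  one : E
  comm : ∀ p q, oplus p q = oplus q p
  assoc : ∀ p q r s qr, oplus q r = some qr → oplus p qr = some s →
    ∃ pq, oplus p q = some pq ∧ oplus pq r = some s
  orthosupp : ∀ p, ∃! q, oplus p q = some one
  zero_unit : ∀ p q, oplus one p = some q → p = zero

namespace EffectAlgebra

variable {E : Type*}

/-- `p ≤ q` iff there is `r` with `p ⊕ r` defined and equal to `q`. -/
def le (W : EffectAlgebra E) (p q : E) : Prop := ∃ r, W.oplus p r = some q

/-- An atom is a minimal element of `E \ {0}`. -/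
def IsAtomElem (W : EffectAlgebra E) (x : E) : Prop :=
  x ≠ W.zero ∧ ∀ y : E, W.le y x → y ≠ W.zero → y = x

/-- Partial orthosum of a list of elements. -/
def listSum (W : EffectAlgebra E) : List E → Option E
  | [] => some W.zero
  | x :: xs => (listSum W xs).bind (fun y => W.oplus x y)

/-- The orthosum `k 0 • a 0 ⊕ ⋯ ⊕ k (m-1) • a (m-1)`, when defined. -/
def mulSum (W : EffectAlgebra E) {m : ℕ} (a : Fin m → E) (k : Fin m → ℕ) : Option E :=
  W.listSum ((List.ofFn (fun t => List.replicate (k t) (a t))).flatten)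

/-- `Seq(E)`: tuples `k` with `⨁ k t • a t` defined and equal to `1`. -/
def SeqSet (W : EffectAlgebra E) {m : ℕ} (a : Fin m → E) : Set (Fin m → ℕ) :=
  {k | W.mulSum a k = some W.one}

/-- `a : Fin m → E` enumerates the atoms of `E` without repetition. -/
def AtomFamily (W : EffectAlgebra E) {m : ℕ} (a : Fin m → E) : Prop :=
  Function.Injective a ∧ (∀ t, W.IsAtomElem (a t)) ∧
    ∀ x : E, W.IsAtomElem x → ∃ t, x = a t

/-- `A ∈ M(E)`: the rows of `A` are pairwise distinct and enumerate `Seq(E)`. -/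
def MemM (W : EffectAlgebra E) {m n : ℕ} (a : Fin m → E) (A : Matrix (Fin n) (Fin m) ℕ) : Prop :=
  (∀ i j : Fin n, i ≠ j → ∃ t, A i t ≠ A j t) ∧
    {k : Fin m → ℕ | ∃ i, A i = k} = W.SeqSet a

/-- A state on an effect algebra. -/
def IsState (W : EffectAlgebra E) (s : E → ℝ) : Prop :=
  (∀ x, 0 ≤ s x ∧ s x ≤ 1) ∧ s W.one = 1 ∧
    ∀ p q r, W.oplus p q = some r → s p + s q ≤ 1 ∧ s r = s p + s q

end EffectAlgebra

/-- `(A|1)`: the matrix `A` augmented by a column of ones. -/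
def augmentOnes {n m : ℕ} {R : Type*} [One R] (A : Matrix (Fin n) (Fin m) R) :
    Matrix (Fin n) (Fin (m + 1)) R :=
  Matrix.of fun i j => if h : (j : ℕ) < m then A i ⟨j, h⟩ else 1

namespace EffectAlgebra

variable {E : Type*} (W : EffectAlgebra E)

lemma one_oplus_zero : W.oplus W.one W.zero = some W.one := by
  obtain ⟨q, hq, -⟩ := W.orthosupp W.one
  rwa [W.zero_unit q W.one hq] at hq

lemma oplus_zero (p : E) : W.oplus p W.zero = some p := by
  obtain ⟨p', hp', -⟩ := W.orthosupp p
  have h1 : W.oplus W.zero W.one = some W.one := by rw [W.comm]; exact W.one_oplus_zero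
  obtain ⟨u, hu, hu1⟩ := W.assoc W.zero p p' W.one W.one hp' h1
  have hp'u : W.oplus p' u = some W.one := by rwa [W.comm] at hu1
  have hp'p : W.oplus p' p = some W.one := by rwa [W.comm] at hp'
  obtain rfl : p = u := (W.orthosupp p').unique hp'p hp'u
  rwa [W.comm] at hu

lemma assoc_rev {p q r pq s : E} (hpq : W.oplus p q = some pq) (h : W.oplus pq r = some s) :
    ∃ qr, W.oplus q r = some qr ∧ W.oplus p qr = some s := by
  obtain ⟨rp, hrp, hrpq⟩ := W.assoc r p q s pq hpq (by rwa [W.comm])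
  obtain ⟨qr, hqr, h'⟩ := W.assoc q r p s rp hrp (by rwa [W.comm] at hrpq)
  exact ⟨qr, hqr, by rwa [W.comm] at h'⟩

lemma oplus_left_cancel {c b b' v : E} (h : W.oplus c b = some v) (h' : W.oplus c b' = some v) :
    b = b' := by
  obtain ⟨v', hv', -⟩ := W.orthosupp v
  have hv'v : W.oplus v' v = some W.one := by rwa [W.comm]
  obtain ⟨u, hu, hub⟩ := W.assoc v' c b W.one v h hv'v
  obtain ⟨u', hu', hub'⟩ := W.assoc v' c b' W.one v h' hv'v
  obtain rfl : u = u' := Option.some_injective _ (hu.symm.trans hu')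
  exact (W.orthosupp u).unique hub hub'

lemma eq_zero_of_oplus_eq_zero {p q : E} (h : W.oplus p q = some W.zero) : p = W.zero := by
  obtain ⟨u, hu, -⟩ := W.assoc W.one p q W.one W.zero h W.one_oplus_zero
  exact W.zero_unit p u hu

def lt (p q : E) : Prop := ∃ r, r ≠ W.zero ∧ W.oplus p r = some q

lemma lt_irrefl (p : E) : ¬ W.lt p p := fun ⟨_, hr, h⟩ =>
  hr (W.oplus_left_cancel h (W.oplus_zero p))

lemma lt_trans {p q r : E} (hpq : W.lt p q) (hqr : W.lt q r) : W.lt p r := by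
  obtain ⟨u, hu, hpu⟩ := hpq
  obtain ⟨v, -, hqv⟩ := hqr
  obtain ⟨uv, huv, hpuv⟩ := W.assoc_rev hpu hqv
  exact ⟨uv, fun h0 => hu (W.eq_zero_of_oplus_eq_zero (h0 ▸ huv)), hpuv⟩

lemma wellFounded_lt [Finite E] : WellFounded W.lt :=
  haveI : IsTrans E W.lt := ⟨fun _ _ _ => W.lt_trans⟩
  haveI : Std.Irrefl W.lt := ⟨W.lt_irrefl⟩
  Finite.wellFounded_of_trans_of_irrefl W.lt

lemma exists_oplus_left_comm {x y v u w : E} (hu : W.oplus x v = some u)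
    (hw : W.oplus y u = some w) : ∃ u', W.oplus y v = some u' ∧ W.oplus x u' = some w := by
  obtain ⟨yx, hyx, hyxv⟩ := W.assoc y x v w u hu hw
  exact W.assoc_rev (by rwa [W.comm]) hyxv

lemma bind_oplus_bind_oplus_comm (x y : E) (o : Option E) :
    (o.bind (W.oplus x)).bind (W.oplus y) = (o.bind (W.oplus y)).bind (W.oplus x) := by
  suffices ∀ x y w, (o.bind (W.oplus x)).bind (W.oplus y) = some w →
      (o.bind (W.oplus y)).bind (W.oplus x) = some w from
    Option.ext fun w => ⟨this x y w, this y x w⟩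
  intro x y w h
  obtain ⟨u, hu, hw⟩ := Option.bind_eq_some_iff.mp h
  obtain ⟨v, rfl, hv⟩ := Option.bind_eq_some_iff.mp hu
  obtain ⟨u', hu', hw'⟩ := W.exists_oplus_left_comm hv hw
  simp only [Option.bind_some, hu', hw']

lemma listSum_perm {L L' : List E} (h : L.Perm L') : W.listSum L = W.listSum L' := by
  induction h with
  | nil => rfl
  | cons x _ ih => simp only [listSum, ih]
  | swap x y L => simp only [listSum]; exact W.bind_oplus_bind_oplus_comm x y (W.listSum L)
  | trans _ _ ih₁ ih₂ => rw [ih₁, ih₂]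

lemma listSum_append {L₁ L₂ : List E} {u v w : E} (h₁ : W.listSum L₁ = some u)
    (h₂ : W.listSum L₂ = some v) (h : W.oplus u v = some w) :
    W.listSum (L₁ ++ L₂) = some w := by
  induction L₁ generalizing u w with
  | nil =>
    obtain rfl : W.zero = u := Option.some_injective _ h₁
    obtain rfl : v = w := Option.some_injective _ <| by rw [← h, W.comm, W.oplus_zero]
    exact h₂
  | cons y L₁ ih =>
    obtain ⟨u₀, hu₀, hyu₀⟩ := Option.bind_eq_some_iff.mp h₁
    obtain ⟨u₀v, hu₀v, hyw⟩ := W.assoc_rev hyu₀ h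
    simp only [List.cons_append, listSum, ih hu₀ hu₀v, Option.bind_some, hyw]

variable {m : ℕ} (a : Fin m → E)

lemma mulSum_zero : W.mulSum a 0 = some W.zero := by
  simp [mulSum, listSum]

lemma mulSum_single (t : Fin m) : W.mulSum a (Pi.single t 1) = some (a t) := by
  have hcount (l : List (Fin m)) :
      (l.map fun u => List.replicate ((Pi.single t 1 : Fin m → ℕ) u) (a u)).flatten =
        List.replicate (l.count t) (a t) := by
    induction l with
    | nil => rfl
    | cons u l ih =>
      by_cases h : u = t
      · subst h; simp [ih, List.replicate_succ]
      · simp [ih, h]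
  rw [mulSum, List.ofFn_eq_map, hcount,
    List.count_eq_one_of_mem (List.nodup_finRange m) (List.mem_finRange t)]
  exact W.oplus_zero (a t)

lemma mulSum_add {k j : Fin m → ℕ} {u v w : E} (hk : W.mulSum a k = some u)
    (hj : W.mulSum a j = some v) (h : W.oplus u v = some w) : W.mulSum a (k + j) = some w := by
  have hperm := List.flatMap_append_perm (List.finRange m)
    (fun t => List.replicate (k t) (a t)) (fun t => List.replicate (j t) (a t))
  simp only [List.flatMap_def] at hperm
  rw [mulSum, List.ofFn_eq_map] at hk hj ⊢
  simp only [Pi.add_apply, List.replicate_add]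
  rw [← W.listSum_perm hperm]
  exact W.listSum_append hk hj h

lemma exists_mulSum_eq [Finite E] (hatoms : ∀ x, W.IsAtomElem x → ∃ t, x = a t) (x : E) :
    ∃ k, W.mulSum a k = some x := by
  induction x using W.wellFounded_lt.induction with | _ x ih => ?_
  by_cases hx0 : x = W.zero
  · exact ⟨0, hx0 ▸ W.mulSum_zero a⟩
  by_cases hx : W.IsAtomElem x
  · obtain ⟨t, rfl⟩ := hatoms x hx
    exact ⟨_, W.mulSum_single a t⟩
  obtain ⟨y, ⟨r, hyr⟩, hy0, hyx⟩ : ∃ y, W.le y x ∧ y ≠ W.zero ∧ y ≠ x := by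
    simpa [IsAtomElem, hx0, and_assoc] using hx
  have hr0 : r ≠ W.zero := by
    rintro rfl
    exact hyx (Option.some_injective _ (by rw [← hyr, W.oplus_zero]))
  obtain ⟨j, hj⟩ := ih y ⟨r, hr0, hyr⟩
  obtain ⟨k, hk⟩ := ih r ⟨y, hy0, by rwa [W.comm]⟩
  exact ⟨j + k, W.mulSum_add a hj hk hyr⟩

end EffectAlgebra

theorem sum_well_defined_general {E : Type*} [Fintype E] (W : EffectAlgebra E)
    {m : ℕ} (a : Fin m → E) (ha : W.AtomFamily a)
    (s : Fin m → ℝ)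
    (hsol : ∀ y ∈ W.SeqSet a, ∑ t : Fin m, (y t : ℝ) * s t = 1)
    (x : E) (k l : Fin m → ℕ)
    (hk : W.mulSum a k = some x) (hl : W.mulSum a l = some x) :
    ∑ t : Fin m, (k t : ℝ) * s t = ∑ t : Fin m, (l t : ℝ) * s t := by
  obtain ⟨x', hx', -⟩ := W.orthosupp x
  obtain ⟨j, hj⟩ := W.exists_mulSum_eq a ha.2.2 x'
  have hkj := hsol (k + j) (W.mulSum_add a hk hj hx')
  have hlj := hsol (l + j) (W.mulSum_add a hl hj hx')
  simp only [Pi.add_apply, Nat.cast_add, add_mul, Finset.sum_add_distrib] at hkj hlj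
  linarith

/-- Well-definedness: if `∑ y t * s t = 1` for all `y ∈ Seq(E)` and `x` has two
representations `⨁ k t • a t = ⨁ l t • a t`, then `∑ k t * s t = ∑ l t * s t`. -/
theorem sum_well_defined {E : Type*} [Fintype E] (W : EffectAlgebra E)
    {m : ℕ} (a : Fin m → E) (ha : W.AtomFamily a)
    (s : Fin m → ℝ) (hs : ∀ t, 0 ≤ s t)
    (hsol : ∀ y ∈ W.SeqSet a, ∑ t : Fin m, (y t : ℝ) * s t = 1)
    (x : E) (k l : Fin m → ℕ)
    (hk : W.mulSum a k = some x) (hl : W.mulSum a l = some x) :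
    ∑ t : Fin m, (k t : ℝ) * s t = ∑ t : Fin m, (l t : ℝ) * s t :=
  sum_well_defined_general W a ha s hsol x k l hk hl
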